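/- Every uniformly convex and uniformly smooth Banach space X has the weak Bishop-Phelps-Bollobás property for the Crawford number: for every ε > 0 there is η(ε) > 0 such that whenever T ∈ L(X) and (x, x*) ∈ Π(X) satisfy |x*(Tx)| < c(T) + η(ε), there exist S ∈ CNA(X) and (z, z*) ∈ Π(X) with |z*(Sz)| = c(S), ‖S − T‖ < ε, ‖z − x‖ < ε, and ‖z* − x*‖ < ε. -/

import Mathlib

noncomputable def crawford {𝕜 : Type*} [RCLike 𝕜] {E : Type*} [NormedAddCommGroup E]
    [NormedSpace 𝕜 E] (T : E →L[𝕜] E) : ℝ :=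
  sInf {r : ℝ | ∃ (x : E) (f : E →L[𝕜] 𝕜), ‖x‖ = 1 ∧ ‖f‖ = 1 ∧ f x = 1 ∧ r = ‖f (T x)‖}

section aux
variable {𝕜 : Type*} [RCLike 𝕜] {X : Type*} [NormedAddCommGroup X] [NormedSpace 𝕜 X]

lemma crawford_bddBelow (T : X →L[𝕜] X) :
    BddBelow {r : ℝ | ∃ (x : X) (f : X →L[𝕜] 𝕜), ‖x‖ = 1 ∧ ‖f‖ = 1 ∧ f x = 1 ∧ r = ‖f (T x)‖} :=
  ⟨0, by rintro r ⟨x, f, -, -, -, rfl⟩; positivity⟩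

lemma crawford_nonneg (T : X →L[𝕜] X) : 0 ≤ crawford T :=
  Real.sInf_nonneg (by rintro r ⟨x, f, -, -, -, rfl⟩; positivity)

lemma crawford_le_pair (T : X →L[𝕜] X) {x : X} {f : X →L[𝕜] 𝕜}
    (hx : ‖x‖ = 1) (hf : ‖f‖ = 1) (hfx : f x = 1) : crawford T ≤ ‖f (T x)‖ :=
  csInf_le (crawford_bddBelow T) ⟨x, f, hx, hf, hfx, rfl⟩

lemma crawford_sub_le (T T' : X →L[𝕜] X) {x : X} {f : X →L[𝕜] 𝕜}
    (hx : ‖x‖ = 1) (hf : ‖f‖ = 1) (hfx : f x = 1) :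
    crawford T - ‖T - T'‖ ≤ crawford T' := by
  unfold crawford
  refine le_csInf ⟨‖f (T' x)‖, x, f, hx, hf, hfx, rfl⟩ ?_
  rintro r ⟨w, h, hw, hh, hhw, rfl⟩
  have h1 : sInf {r : ℝ | ∃ (x : X) (f : X →L[𝕜] 𝕜), ‖x‖ = 1 ∧ ‖f‖ = 1 ∧ f x = 1 ∧ r = ‖f (T x)‖} ≤ ‖h (T w)‖ := crawford_le_pair T hw hh hhw
  have h2 : ‖h (T w)‖ ≤ ‖h (T' w)‖ + ‖T - T'‖ := by
    have e : h (T w) = h (T' w) + h ((T - T') w) := by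
      simp [ContinuousLinearMap.sub_apply, map_sub]
    rw [e]
    refine (norm_add_le _ _).trans (add_le_add le_rfl ?_)
    calc ‖h ((T - T') w)‖ ≤ ‖h‖ * ‖(T - T') w‖ := h.le_opNorm _
      _ ≤ 1 * (‖T - T'‖ * ‖w‖) := by
          rw [hh]; exact mul_le_mul_of_nonneg_left ((T - T').le_opNorm w) zero_le_one
      _ = ‖T - T'‖ := by rw [hw]; ring
  linarith

lemma exists_pair_crawford_lt (T : X →L[𝕜] X) {x : X} {f : X →L[𝕜] 𝕜}
    (hx : ‖x‖ = 1) (hf : ‖f‖ = 1) (hfx : f x = 1) {H : ℝ} (hH : 0 < H) :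
    ∃ (w : X) (h : X →L[𝕜] 𝕜), ‖w‖ = 1 ∧ ‖h‖ = 1 ∧ h w = 1 ∧ ‖h (T w)‖ < crawford T + H := by
  have hne : Set.Nonempty {r : ℝ | ∃ (x : X) (f : X →L[𝕜] 𝕜), ‖x‖ = 1 ∧ ‖f‖ = 1 ∧ f x = 1 ∧ r = ‖f (T x)‖} := ⟨‖f (T x)‖, x, f, hx, hf, hfx, rfl⟩
  obtain ⟨r, hmem, hr⟩ :=
    exists_lt_of_csInf_lt hne (lt_add_of_pos_right (crawford T) hH)
  obtain ⟨w, h, hw, hh, hhw, rfl⟩ := hmem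
  exact ⟨w, h, hw, hh, hhw, hr⟩

end aux

section rot
variable {𝕜 : Type*} [RCLike 𝕜] {X : Type*} [NormedAddCommGroup X] [NormedSpace 𝕜 X]

lemma unit_rotation {c : 𝕜} (hc : c ≠ 0) :
    ‖(starRingEnd 𝕜) c / (‖c‖ : 𝕜)‖ = 1 ∧ ((starRingEnd 𝕜) c / (‖c‖ : 𝕜)) * c = (‖c‖ : 𝕜) := by
  have hc' : (‖c‖ : 𝕜) ≠ 0 := by
    simpa using (RCLike.ofReal_ne_zero (K := 𝕜)).2 (norm_ne_zero_iff.2 hc)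
  constructor
  · rw [norm_div, RCLike.norm_conj, RCLike.norm_ofReal, abs_of_nonneg (norm_nonneg _),
      div_self (norm_ne_zero_iff.2 hc)]
  · rw [div_mul_eq_mul_div, RCLike.conj_mul, sq]
    rw [mul_div_assoc, div_self hc', mul_one]

lemma rot_vec {γ δ : ℝ} (hδ1 : δ < 1)
    (hUC : ∀ ⦃u : X⦄, ‖u‖ = 1 → ∀ ⦃v : X⦄, ‖v‖ = 1 → γ ≤ ‖u - v‖ → ‖u + v‖ ≤ 2 - δ)
    {x : X} {f : X →L[𝕜] 𝕜} {w : X} (hx : ‖x‖ = 1) (hf : ‖f‖ = 1) (hfx : f x = 1)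
    (hw : ‖w‖ = 1) (hfw : 1 - δ < ‖f w‖) :
    ∃ ω : 𝕜, ‖ω‖ = 1 ∧ f (ω • w) = (‖f w‖ : 𝕜) ∧ ‖ω • w - x‖ < γ := by
  have h0 : f w ≠ 0 := by
    intro h; rw [h, norm_zero] at hfw; linarith
  obtain ⟨hω1, hω2⟩ := unit_rotation (𝕜 := 𝕜) h0
  set ω : 𝕜 := (starRingEnd 𝕜) (f w) / (‖f w‖ : 𝕜) with hωdef
  have happ : f (ω • w) = (‖f w‖ : 𝕜) := by rw [map_smul, smul_eq_mul, hω2]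
  refine ⟨ω, hω1, happ, ?_⟩
  by_contra hcon
  push_neg at hcon
  have h1 : ‖ω • w‖ = 1 := by rw [norm_smul, hω1, one_mul, hw]
  have h2 := hUC h1 hx hcon
  have h3 : f (ω • w + x) = ((‖f w‖ + 1 : ℝ) : 𝕜) := by
    rw [map_add, happ, hfx]; push_cast; ring
  have h4 : ‖f (ω • w + x)‖ ≤ ‖ω • w + x‖ := by
    calc ‖f (ω • w + x)‖ ≤ ‖f‖ * ‖ω • w + x‖ := f.le_opNorm _
      _ = ‖ω • w + x‖ := by rw [hf, one_mul]
  rw [h3, RCLike.norm_ofReal, abs_of_nonneg (by positivity)] at h4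
  linarith

lemma rot_fun {γ δ : ℝ} (hδ1 : δ < 1)
    (hUC : ∀ ⦃u : X →L[𝕜] 𝕜⦄, ‖u‖ = 1 → ∀ ⦃v : X →L[𝕜] 𝕜⦄, ‖v‖ = 1 → γ ≤ ‖u - v‖ → ‖u + v‖ ≤ 2 - δ)
    {x : X} {f h : X →L[𝕜] 𝕜} (hx : ‖x‖ = 1) (hf : ‖f‖ = 1) (hfx : f x = 1)
    (hh : ‖h‖ = 1) (hhx : 1 - δ < ‖h x‖) :
    ∃ ω : 𝕜, ‖ω‖ = 1 ∧ (ω • h) x = (‖h x‖ : 𝕜) ∧ ‖ω • h - f‖ < γ := by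
  have h0 : h x ≠ 0 := by
    intro h'; rw [h', norm_zero] at hhx; linarith
  obtain ⟨hω1, hω2⟩ := unit_rotation (𝕜 := 𝕜) h0
  set ω : 𝕜 := (starRingEnd 𝕜) (h x) / (‖h x‖ : 𝕜) with hωdef
  have happ : (ω • h) x = (‖h x‖ : 𝕜) := by
    rw [ContinuousLinearMap.smul_apply, smul_eq_mul, hω2]
  refine ⟨ω, hω1, happ, ?_⟩
  by_contra hcon
  push_neg at hcon
  have h1 : ‖ω • h‖ = 1 := by rw [norm_smul ω h, hω1, one_mul, hh]
  have h2 := hUC h1 hf hcon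
  have h3 : (ω • h + f) x = ((‖h x‖ + 1 : ℝ) : 𝕜) := by
    rw [ContinuousLinearMap.add_apply, happ, hfx]; push_cast; ring
  have h4 : ‖(ω • h + f) x‖ ≤ ‖ω • h + f‖ := by
    calc ‖(ω • h + f) x‖ ≤ ‖ω • h + f‖ * ‖x‖ := (ω • h + f).le_opNorm _
      _ = ‖ω • h + f‖ := by rw [hx, mul_one]
  rw [h3, RCLike.norm_ofReal, abs_of_nonneg (by positivity)] at h4
  linarith

end rot

section step
variable {𝕜 : Type*} [RCLike 𝕜] {X : Type*} [NormedAddCommGroup X] [NormedSpace 𝕜 X]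

set_option maxHeartbeats 1000000 in
lemma step_lemma {T : X →L[𝕜] X} {x : X} {f : X →L[𝕜] 𝕜}
    (hx : ‖x‖ = 1) (hf : ‖f‖ = 1) (hfx : f x = 1)
    {t γ δ H H' : ℝ} (ht : 0 < t) (hγ : 0 < γ) (hδ0 : 0 < δ) (hδ1 : δ ≤ 1/2)
    (hH : H ≤ t * δ / 2) (hH'0 : 0 < H') (hH'H : H' ≤ H)
    (hUCX : ∀ ⦃u : X⦄, ‖u‖ = 1 → ∀ ⦃v : X⦄, ‖v‖ = 1 → γ ≤ ‖u - v‖ → ‖u + v‖ ≤ 2 - δ)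
    (hUCD : ∀ ⦃u : X →L[𝕜] 𝕜⦄, ‖u‖ = 1 → ∀ ⦃v : X →L[𝕜] 𝕜⦄, ‖v‖ = 1 → γ ≤ ‖u - v‖ → ‖u + v‖ ≤ 2 - δ)
    (hval : ‖f (T x)‖ < crawford T + H) :
    ∃ (T' : X →L[𝕜] X) (x' : X) (f' : X →L[𝕜] 𝕜),
      ‖x'‖ = 1 ∧ ‖f'‖ = 1 ∧ f' x' = 1 ∧ ‖f' (T' x')‖ < crawford T' + H' ∧
      ‖T' - T‖ ≤ t ∧ ‖x' - x‖ ≤ γ ∧ ‖f' - f‖ ≤ 3 * γ := by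
  set a : 𝕜 := f (T x) with hadef
  by_cases hsmall : ‖a‖ < t
  · -- kill step
    refine ⟨T - f.smulRight (a • x), x, f, hx, hf, hfx, ?_, ?_, by simpa using hγ.le,
      by simpa using (by positivity : (0:ℝ) ≤ 3 * γ)⟩
    · have e1 : (T - f.smulRight (a • x)) x = T x - a • x := by
        rw [ContinuousLinearMap.sub_apply, ContinuousLinearMap.smulRight_apply, hfx, one_smul]
      have e2 : f ((T - f.smulRight (a • x)) x) = 0 := by
        rw [e1, map_sub, map_smul, ← hadef, smul_eq_mul, hfx, mul_one, sub_self]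
      rw [e2, norm_zero]
      have := crawford_nonneg (T - f.smulRight (a • x))
      linarith
    · have e3 : T - f.smulRight (a • x) - T = -(f.smulRight (a • x)) := by abel
      rw [e3, norm_neg, ContinuousLinearMap.norm_smulRight_apply, hf, one_mul, norm_smul, hx,
        mul_one]
      exact hsmall.le
  · push_neg at hsmall
    have ha0 : a ≠ 0 := by
      intro h'; rw [h', norm_zero] at hsmall; linarith
    have hna : 0 < ‖a‖ := lt_of_lt_of_le ht hsmall
    set b : 𝕜 := ((t / ‖a‖ : ℝ) : 𝕜) * a with hbdef
    set K : X →L[𝕜] X := f.smulRight (b • x) with hKdef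
    set T' : X →L[𝕜] X := T - K with hT'def
    have hKapp : ∀ w : X, K w = (f w * b) • x := by
      intro w
      rw [hKdef, ContinuousLinearMap.smulRight_apply, smul_smul]
    have hT'app : ∀ w : X, T' w = T w - (f w * b) • x := by
      intro w; rw [hT'def, ContinuousLinearMap.sub_apply, hKapp]
    have hnormb : ‖b‖ = t := by
      rw [hbdef, norm_mul, RCLike.norm_ofReal, abs_of_nonneg (by positivity),
        div_mul_cancel₀ _ hna.ne']
    have hKnorm : ‖K‖ = t := by
      rw [hKdef, ContinuousLinearMap.norm_smulRight_apply, hf, one_mul, norm_smul, hx, mul_one,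
        hnormb]
    have hTT' : ‖T' - T‖ ≤ t := by
      have e3 : T' - T = -K := by rw [hT'def]; abel
      rw [e3, norm_neg, hKnorm]
    have hfT'x : f (T' x) = a - b := by
      rw [hT'app, map_sub, map_smul, smul_eq_mul, hfx, mul_one, one_mul, ← hadef]
    have hab : ‖a - b‖ = ‖a‖ - t := by
      have e4 : a - b = ((1 - t / ‖a‖ : ℝ) : 𝕜) * a := by rw [hbdef]; push_cast; ring
      have h5 : t / ‖a‖ ≤ 1 := (div_le_one hna).2 hsmall
      rw [e4, norm_mul, RCLike.norm_ofReal, abs_of_nonneg (by linarith), sub_mul, one_mul,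
        div_mul_cancel₀ _ hna.ne']
    have hcT'le : crawford T' ≤ ‖a‖ - t := by
      have := crawford_le_pair T' hx hf hfx
      rwa [hfT'x, hab] at this
    have hlow : ∀ (w : X) (h : X →L[𝕜] 𝕜), ‖w‖ = 1 → ‖h‖ = 1 → h w = 1 →
        crawford T - t * (‖f w‖ * ‖h x‖) ≤ ‖h (T' w)‖ := by
      intro w h hw hh hhw
      have h1 : h (T' w) = h (T w) - (f w * b) * h x := by
        rw [hT'app, map_sub, map_smul, smul_eq_mul]
      have h2 : ‖(f w * b) * h x‖ = t * (‖f w‖ * ‖h x‖) := by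
        rw [norm_mul, norm_mul, hnormb]; ring
      have h3 : crawford T ≤ ‖h (T w)‖ := crawford_le_pair T hw hh hhw
      calc crawford T - t * (‖f w‖ * ‖h x‖) ≤ ‖h (T w)‖ - ‖(f w * b) * h x‖ := by
            rw [h2]; linarith
        _ ≤ ‖h (T w) - (f w * b) * h x‖ := norm_sub_norm_le _ _
        _ = ‖h (T' w)‖ := by rw [h1]
    obtain ⟨w, h, hw, hh, hhw, hval'⟩ := exists_pair_crawford_lt T' hx hf hfx hH'0
    have hfw1 : ‖f w‖ ≤ 1 := by
      have := f.le_opNorm w; rwa [hf, one_mul, hw] at this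
    have hhx1 : ‖h x‖ ≤ 1 := by
      have := h.le_opNorm x; rwa [hh, one_mul, hx] at this
    have hcTlow : ‖a‖ - H < crawford T := by rw [hadef]; linarith
    have hnear : 1 - δ < ‖f w‖ ∧ 1 - δ < ‖h x‖ := by
      by_contra hcon
      have hs : ‖f w‖ * ‖h x‖ ≤ 1 - δ := by
        rcases not_and_or.1 hcon with hc | hc <;> push_neg at hc <;>
          nlinarith [norm_nonneg (f w), norm_nonneg (h x)]
      have h6 := hlow w h hw hh hhw
      have h7 : t * (‖f w‖ * ‖h x‖) ≤ t * (1 - δ) := by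
        exact mul_le_mul_of_nonneg_left hs ht.le
      have h8 : crawford T' + H' ≤ ‖h (T' w)‖ := by nlinarith
      linarith
    have hδlt1 : δ < 1 := by linarith
    obtain ⟨ω, hω1, hω2, hω3⟩ := rot_vec hδlt1 hUCX hx hf hfx hw hnear.1
    obtain ⟨ω', hω'1, hω'2, hω'3⟩ := rot_fun hδlt1 hUCD hx hf hfx hh hnear.2
    have hωω : ω * (starRingEnd 𝕜) ω = 1 := by
      rw [RCLike.mul_conj, hω1]; push_cast; ring
    refine ⟨T', ω • w, (starRingEnd 𝕜) ω • h, ?_, ?_, ?_, ?_, hTT', hω3.le, ?_⟩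
    · rw [norm_smul, hω1, one_mul, hw]
    · rw [norm_smul (starRingEnd 𝕜 ω) h, RCLike.norm_conj, hω1, one_mul, hh]
    · rw [ContinuousLinearMap.smul_apply, map_smul, smul_eq_mul, smul_eq_mul, hhw, mul_one,
        mul_comm, hωω]
    · have e5 : ((starRingEnd 𝕜) ω • h) (T' (ω • w)) = (starRingEnd 𝕜) ω * (ω * h (T' w)) := by
        rw [ContinuousLinearMap.smul_apply, map_smul, map_smul, smul_eq_mul, smul_eq_mul]
      have e6 : ‖((starRingEnd 𝕜) ω • h) (T' (ω • w))‖ = ‖h (T' w)‖ := by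
        rw [e5, ← mul_assoc, mul_comm ((starRingEnd 𝕜) ω) ω, hωω, one_mul]
      rwa [e6]
    · -- ‖conj ω • h - f‖ ≤ 3γ
      have hu1 : ‖ω • w‖ = 1 := by rw [norm_smul, hω1, one_mul, hw]
      have e7 : (ω' • h) (ω • w) = ω' * ω := by
        rw [ContinuousLinearMap.smul_apply, map_smul, smul_eq_mul, smul_eq_mul, hhw, mul_one]
      have key : ‖ω' * ω - 1‖ ≤ 2 * γ := by
        have d1 : ‖(ω' • h) (ω • w) - f (ω • w)‖ ≤ ‖ω' • h - f‖ * ‖ω • w‖ := by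
          have := (ω' • h - f).le_opNorm (ω • w)
          rwa [ContinuousLinearMap.sub_apply] at this
        have d2 : ‖f (ω • w) - f x‖ ≤ ‖ω • w - x‖ := by
          rw [← map_sub]
          have := f.le_opNorm (ω • w - x)
          rwa [hf, one_mul] at this
        calc ‖ω' * ω - 1‖ = ‖((ω' • h) (ω • w) - f (ω • w)) + (f (ω • w) - f x)‖ := by
              congr 1
              rw [e7, hfx]
              ring
          _ ≤ ‖(ω' • h) (ω • w) - f (ω • w)‖ + ‖f (ω • w) - f x‖ := norm_add_le _ _
          _ ≤ ‖ω' • h - f‖ * ‖ω • w‖ + ‖ω • w - x‖ := add_le_add d1 d2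
          _ ≤ γ * 1 + γ := by
              rw [hu1]
              exact add_le_add (by simpa using hω'3.le) hω3.le
          _ = 2 * γ := by ring
      have e8 : ‖(starRingEnd 𝕜) ω - ω'‖ = ‖1 - ω' * ω‖ := by
        calc ‖(starRingEnd 𝕜) ω - ω'‖ = ‖ω * ((starRingEnd 𝕜) ω - ω')‖ := by
              rw [norm_mul, hω1, one_mul]
          _ = ‖1 - ω' * ω‖ := by rw [mul_sub, hωω, mul_comm ω ω']
      calc ‖(starRingEnd 𝕜) ω • h - f‖
          ≤ ‖(starRingEnd 𝕜) ω • h - ω' • h‖ + ‖ω' • h - f‖ := by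
            have : (starRingEnd 𝕜) ω • h - f =
                ((starRingEnd 𝕜) ω • h - ω' • h) + (ω' • h - f) := by abel
            rw [this]; exact norm_add_le _ _
        _ ≤ 2 * γ + γ := by
            have e9 : (starRingEnd 𝕜) ω • h - ω' • h = ((starRingEnd 𝕜) ω - ω') • h := by
              ext y
              simp only [ContinuousLinearMap.smul_apply, ContinuousLinearMap.sub_apply,
                smul_eq_mul]
              ring
            rw [e9, norm_smul ((starRingEnd 𝕜) ω - ω') h, hh, mul_one, e8]
            have : ‖1 - ω' * ω‖ = ‖ω' * ω - 1‖ := norm_sub_rev _ _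
            rw [this]
            exact add_le_add key hω'3.le
        _ = 3 * γ := by ring
end step

def CrawfordAttains {𝕜 : Type*} [RCLike 𝕜] {E : Type*} [NormedAddCommGroup E]
    [NormedSpace 𝕜 E] (T : E →L[𝕜] E) : Prop :=
  ∃ (x : E) (f : E →L[𝕜] 𝕜), ‖x‖ = 1 ∧ ‖f‖ = 1 ∧ f x = 1 ∧ crawford T = ‖f (T x)‖

open Filter Topology in
set_option maxHeartbeats 1000000 in
/-- Weak Bishop–Phelps–Bollobás property for the Crawford number, for a uniformly
convex and uniformly smooth Banach space (uniform smoothness is expressed by the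
uniform convexity of the dual space). -/
theorem weak_BPB_property_for_crawford
    {𝕜 : Type*} [RCLike 𝕜] {X : Type*} [NormedAddCommGroup X] [NormedSpace 𝕜 X]
    [CompleteSpace X] [UniformConvexSpace X]
    [UniformConvexSpace (StrongDual 𝕜 X)] :
    ∀ ε : ℝ, 0 < ε → ∃ η : ℝ, 0 < η ∧
      ∀ (T : X →L[𝕜] X) (x : X) (f : X →L[𝕜] 𝕜),
        ‖x‖ = 1 → ‖f‖ = 1 → f x = 1 → ‖f (T x)‖ < crawford T + η →
        ∃ (S : X →L[𝕜] X) (z : X) (g : X →L[𝕜] 𝕜),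
          ‖z‖ = 1 ∧ ‖g‖ = 1 ∧ g z = 1 ∧ ‖g (S z)‖ = crawford S ∧
          ‖S - T‖ < ε ∧ ‖z - x‖ < ε ∧ ‖g - f‖ < ε := by
  intro ε hε
  set γ : ℕ → ℝ := fun n => ε / 8 * (1 / 2) ^ n with hγdef
  have hγpos : ∀ n, 0 < γ n := fun n => by positivity
  have hXuc : ∀ n : ℕ, ∃ δ, 0 < δ ∧ ∀ ⦃u : X⦄, ‖u‖ = 1 → ∀ ⦃v : X⦄, ‖v‖ = 1 →
      γ n ≤ ‖u - v‖ → ‖u + v‖ ≤ 2 - δ := fun n =>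
    exists_forall_sphere_dist_add_le_two_sub X (hγpos n)
  choose δX hδX0 hδX using hXuc
  have hDuc : ∀ n : ℕ, ∃ δ, 0 < δ ∧ ∀ ⦃u : X →L[𝕜] 𝕜⦄, ‖u‖ = 1 → ∀ ⦃v : X →L[𝕜] 𝕜⦄, ‖v‖ = 1 →
      γ n ≤ ‖u - v‖ → ‖u + v‖ ≤ 2 - δ := by
    intro n
    obtain ⟨δ, h0, h1⟩ :=
      exists_forall_sphere_dist_add_le_two_sub (StrongDual 𝕜 X) (hγpos n)
    exact ⟨δ, h0, fun u hu v hv huv => h1 hu hv huv⟩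
  choose δD hδD0 hδD using hDuc
  set δ' : ℕ → ℝ := fun n => min (min (δX n) (δD n)) (1 / 2) with hδ'def
  have hδ'0 : ∀ n, 0 < δ' n := fun n => lt_min (lt_min (hδX0 n) (hδD0 n)) one_half_pos
  have hδ'le : ∀ n, δ' n ≤ 1 / 2 := fun n => min_le_right _ _
  have hδ'X : ∀ n, δ' n ≤ δX n := fun n => le_trans (min_le_left _ _) (min_le_left _ _)
  have hδ'D : ∀ n, δ' n ≤ δD n := fun n => le_trans (min_le_left _ _) (min_le_right _ _)
  have hUCX : ∀ n, ∀ ⦃u : X⦄, ‖u‖ = 1 → ∀ ⦃v : X⦄, ‖v‖ = 1 → γ n ≤ ‖u - v‖ →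
      ‖u + v‖ ≤ 2 - δ' n :=
    fun n u hu v hv huv => (hδX n hu hv huv).trans (by linarith [hδ'X n])
  have hUCD : ∀ n, ∀ ⦃u : X →L[𝕜] 𝕜⦄, ‖u‖ = 1 → ∀ ⦃v : X →L[𝕜] 𝕜⦄, ‖v‖ = 1 → γ n ≤ ‖u - v‖ →
      ‖u + v‖ ≤ 2 - δ' n :=
    fun n u hu v hv huv => (hδD n hu hv huv).trans (by linarith [hδ'D n])
  set η : ℕ → ℝ := fun n => γ n * δ' n / 2 with hηdef
  have hη0 : ∀ n, 0 < η n := fun n => by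
    have h1 := hγpos n; have h2 := hδ'0 n
    simp only [hηdef]; positivity
  set H : ℕ → ℝ := fun n => Nat.rec (η 0) (fun k Hk => min Hk (η (k + 1))) n with hHdef
  have hH0 : H 0 = η 0 := rfl
  have hHS : ∀ n, H (n + 1) = min (H n) (η (n + 1)) := fun n => rfl
  have hHpos : ∀ n, 0 < H n := by
    intro n; induction n with
    | zero => rw [hH0]; exact hη0 0
    | succ k ih => rw [hHS]; exact lt_min ih (hη0 _)
  have hHmono : ∀ n, H (n + 1) ≤ H n := fun n => by rw [hHS]; exact min_le_left _ _
  have hHle : ∀ n, H n ≤ η n := by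
    intro n; cases n with
    | zero => rw [hH0]
    | succ k => rw [hHS]; exact min_le_right _ _
  refine ⟨H 0, hHpos 0, ?_⟩
  intro T x f hx hf hfx hval
  have step : ∀ (n : ℕ) (p : (X →L[𝕜] X) × X × (X →L[𝕜] 𝕜)),
      ∃ q : (X →L[𝕜] X) × X × (X →L[𝕜] 𝕜),
        (‖p.2.1‖ = 1 ∧ ‖p.2.2‖ = 1 ∧ p.2.2 p.2.1 = 1 ∧
            ‖p.2.2 (p.1 p.2.1)‖ < crawford p.1 + H n) →
          (‖q.2.1‖ = 1 ∧ ‖q.2.2‖ = 1 ∧ q.2.2 q.2.1 = 1 ∧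
              ‖q.2.2 (q.1 q.2.1)‖ < crawford q.1 + H (n + 1)) ∧
            ‖q.1 - p.1‖ ≤ γ n ∧ ‖q.2.1 - p.2.1‖ ≤ γ n ∧ ‖q.2.2 - p.2.2‖ ≤ 3 * γ n := by
    intro n p
    by_cases hp : ‖p.2.1‖ = 1 ∧ ‖p.2.2‖ = 1 ∧ p.2.2 p.2.1 = 1 ∧
        ‖p.2.2 (p.1 p.2.1)‖ < crawford p.1 + H n
    · obtain ⟨h1, h2, h3, h4⟩ := hp
      obtain ⟨T', x', f', a1, a2, a3, a4, a5, a6, a7⟩ :=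
        step_lemma h1 h2 h3 (hγpos n) (hγpos n) (hδ'0 n) (hδ'le n)
          (hHle n) (hHpos (n + 1)) (hHmono n) (hUCX n) (hUCD n) h4
      exact ⟨(T', x', f'), fun _ => ⟨⟨a1, a2, a3, a4⟩, a5, a6, a7⟩⟩
    · exact ⟨p, fun hcon => absurd hcon hp⟩
  choose F hF using step
  set seq : ℕ → (X →L[𝕜] X) × X × (X →L[𝕜] 𝕜) :=
    fun n => Nat.rec (T, x, f) (fun k p => F k p) n with hseqdef
  have hseqS : ∀ n, seq (n + 1) = F n (seq n) := fun n => rfl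
  have inv : ∀ n, ‖(seq n).2.1‖ = 1 ∧ ‖(seq n).2.2‖ = 1 ∧ (seq n).2.2 (seq n).2.1 = 1 ∧
      ‖(seq n).2.2 ((seq n).1 (seq n).2.1)‖ < crawford (seq n).1 + H n := by
    intro n; induction n with
    | zero => exact ⟨hx, hf, hfx, hval⟩
    | succ k ih => rw [hseqS]; exact (hF k (seq k) ih).1
  have close : ∀ n, ‖(seq (n + 1)).1 - (seq n).1‖ ≤ γ n ∧
      ‖(seq (n + 1)).2.1 - (seq n).2.1‖ ≤ γ n ∧
      ‖(seq (n + 1)).2.2 - (seq n).2.2‖ ≤ 3 * γ n := fun n => by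
    rw [hseqS]; exact (hF n (seq n) (inv n)).2
  set Tn : ℕ → X →L[𝕜] X := fun n => (seq n).1 with hTndef
  set xn : ℕ → X := fun n => (seq n).2.1 with hxndef
  set fn : ℕ → X →L[𝕜] 𝕜 := fun n => (seq n).2.2 with hfndef
  have hdT : ∀ n, dist (Tn n) (Tn (n + 1)) ≤ ε / 8 * (1 / 2) ^ n := fun n => by
    rw [dist_eq_norm, norm_sub_rev]; exact (close n).1
  have hdx : ∀ n, dist (xn n) (xn (n + 1)) ≤ ε / 8 * (1 / 2) ^ n := fun n => by
    rw [dist_eq_norm, norm_sub_rev]; exact (close n).2.1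
  have hdf : ∀ n, dist (fn n) (fn (n + 1)) ≤ 3 * (ε / 8) * (1 / 2) ^ n := fun n => by
    rw [dist_eq_norm, norm_sub_rev]
    refine le_trans (close n).2.2 (le_of_eq ?_)
    simp only [hγdef]; ring
  have hhalf : (1 : ℝ) / 2 < 1 := by norm_num
  obtain ⟨S, hS⟩ := cauchySeq_tendsto_of_complete
    (cauchySeq_of_le_geometric (1 / 2) (ε / 8) hhalf hdT)
  obtain ⟨z, hz⟩ := cauchySeq_tendsto_of_complete
    (cauchySeq_of_le_geometric (1 / 2) (ε / 8) hhalf hdx)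
  obtain ⟨g, hg⟩ := cauchySeq_tendsto_of_complete
    (cauchySeq_of_le_geometric (1 / 2) (3 * (ε / 8)) hhalf hdf)
  have hz1 : ‖z‖ = 1 := by
    have h1 : Tendsto (fun n => ‖xn n‖) atTop (𝓝 ‖z‖) := hz.norm
    rw [show (fun n => ‖xn n‖) = fun _ => (1 : ℝ) from funext fun n => (inv n).1] at h1
    exact tendsto_nhds_unique h1 tendsto_const_nhds
  have hg1 : ‖g‖ = 1 := by
    have h1 : Tendsto (fun n => ‖fn n‖) atTop (𝓝 ‖g‖) := hg.norm
    rw [show (fun n => ‖fn n‖) = fun _ => (1 : ℝ) from funext fun n => (inv n).2.1] at h1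
    exact tendsto_nhds_unique h1 tendsto_const_nhds
  have hcont1 : Continuous fun p : (X →L[𝕜] X) × X => p.1 p.2 :=
    isBoundedBilinearMap_apply.continuous
  have hcont2 : Continuous fun p : (X →L[𝕜] 𝕜) × X => p.1 p.2 :=
    isBoundedBilinearMap_apply.continuous
  have hTz : Tendsto (fun n => Tn n (xn n)) atTop (𝓝 (S z)) :=
    (hcont1.tendsto (S, z)).comp (hS.prodMk_nhds hz)
  have hfTx : Tendsto (fun n => fn n (Tn n (xn n))) atTop (𝓝 (g (S z))) :=
    (hcont2.tendsto (g, S z)).comp (hg.prodMk_nhds hTz)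
  have hgz : g z = 1 := by
    have h1 : Tendsto (fun n => fn n (xn n)) atTop (𝓝 (g z)) :=
      (hcont2.tendsto (g, z)).comp (hg.prodMk_nhds hz)
    rw [show (fun n => fn n (xn n)) = fun _ => (1 : 𝕜) from funext fun n => (inv n).2.2.1] at h1
    exact tendsto_nhds_unique h1 tendsto_const_nhds
  have hTS : Tendsto (fun n => ‖Tn n - S‖) atTop (𝓝 0) := by
    have h1 := tendsto_iff_dist_tendsto_zero.1 hS
    simpa only [dist_eq_norm] using h1
  have hcraw : Tendsto (fun n => crawford (Tn n)) atTop (𝓝 (crawford S)) := by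
    rw [← tendsto_sub_nhds_zero_iff]
    apply squeeze_zero_norm (fun n => ?_) hTS
    have b1 := crawford_sub_le (Tn n) S (inv n).1 (inv n).2.1 (inv n).2.2.1
    have b2 := crawford_sub_le S (Tn n) (inv n).1 (inv n).2.1 (inv n).2.2.1
    rw [norm_sub_rev S (Tn n)] at b2
    rw [Real.norm_eq_abs, abs_sub_le_iff]
    constructor <;> linarith
  have hγtend : Tendsto γ atTop (𝓝 0) := by
    have h1 : Tendsto (fun n : ℕ => ((1 : ℝ) / 2) ^ n) atTop (𝓝 0) :=
      tendsto_pow_atTop_nhds_zero_of_lt_one (by norm_num) (by norm_num)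
    have h2 := h1.const_mul (ε / 8)
    rw [mul_zero] at h2
    exact h2
  have hHtend : Tendsto H atTop (𝓝 0) := by
    apply squeeze_zero (fun n => (hHpos n).le) (fun n => ?_) hγtend
    refine (hHle n).trans ?_
    have h1 := hγpos n; have h2 := hδ'0 n; have h3 := hδ'le n
    have h4 : η n = γ n * δ' n / 2 := rfl
    rw [h4]
    nlinarith
  have hupper : ‖g (S z)‖ ≤ crawford S := by
    have h1 : Tendsto (fun n => crawford (Tn n) + H n) atTop (𝓝 (crawford S + 0)) :=
      hcraw.add hHtend
    rw [add_zero] at h1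
    exact le_of_tendsto_of_tendsto' hfTx.norm h1 fun n => ((inv n).2.2.2).le
  have hattain : ‖g (S z)‖ = crawford S :=
    le_antisymm hupper (crawford_le_pair S hz1 hg1 hgz)
  have hb1 := dist_le_of_le_geometric_of_tendsto₀ (1 / 2) (ε / 8) hhalf hdT hS
  have hb2 := dist_le_of_le_geometric_of_tendsto₀ (1 / 2) (ε / 8) hhalf hdx hz
  have hb3 := dist_le_of_le_geometric_of_tendsto₀ (1 / 2) (3 * (ε / 8)) hhalf hdf hg
  rw [dist_eq_norm] at hb1 hb2 hb3
  have e1 : Tn 0 = T := rfl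
  have e2 : xn 0 = x := rfl
  have e3 : fn 0 = f := rfl
  rw [e1] at hb1; rw [e2] at hb2; rw [e3] at hb3
  rw [norm_sub_rev] at hb1 hb2 hb3
  refine ⟨S, z, g, hz1, hg1, hgz, hattain, ?_, ?_, ?_⟩
  · have : ε / 8 / (1 - 1 / 2) = ε / 4 := by ring
    rw [this] at hb1; linarith
  · have : ε / 8 / (1 - 1 / 2) = ε / 4 := by ring
    rw [this] at hb2; linarith
  · have : 3 * (ε / 8) / (1 - 1 / 2) = 3 * ε / 4 := by ring
    rw [this] at hb3; linarith
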